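/- arXiv:2201.04238 — 2 statements merged into one kernel-verified Lean document; each statement's English description precedes it below -/
import Mathlib

section
/- Let X and Y be linear subspaces of ℝⁿ with dim X = dim Y = m. Then there exist orthonormal bases {x₁, …, xₘ} of X and {y₁, …, yₘ} of Y such that ⟨xᵢ, yⱼ⟩ = 0 for all i ≠ j. -/
open scoped RealInnerProductSpace BigOperators

/-- The Euclidean operator norm of a real matrix: `sup {‖Ax‖ : ‖x‖ = 1}`. -/
noncomputable def opNorm {m n : ℕ} (A : Matrix (Fin m) (Fin n) ℝ) : ℝ :=
  sSup {c : ℝ | ∃ x : EuclideanSpace ℝ (Fin n), ‖x‖ = 1 ∧ c = ‖Matrix.toEuclideanLin A x‖}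

/-- The matrix of the orthogonal projection of `ℝⁿ` onto the subspace `U`. -/
noncomputable def projMatrix {n : ℕ} (U : Submodule ℝ (EuclideanSpace ℝ (Fin n))) :
    Matrix (Fin n) (Fin n) ℝ :=
  Matrix.toEuclideanLin.symm (U.subtype ∘ₗ (U.orthogonalProjectionOnto).toLinearMap)

/-- The minimal stretch of a matrix `A` on a subspace `U`: `inf {‖Ax‖ : x ∈ U, ‖x‖ = 1}`. -/
noncomputable def minStretch {m n : ℕ} (A : Matrix (Fin m) (Fin n) ℝ)
    (U : Submodule ℝ (EuclideanSpace ℝ (Fin n))) : ℝ :=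
  sInf {c : ℝ | ∃ x ∈ U, ‖x‖ = 1 ∧ c = ‖Matrix.toEuclideanLin A x‖}

/-!
Let `T : X → Y` be the orthogonal projection onto `Y` restricted to `X`, so that
`⟪x, y⟫ = ⟪T x, y⟫` for `x ∈ X`, `y ∈ Y`. An orthonormal eigenbasis `(xᵢ)` of the symmetric
operator `T†T` on `X` has pairwise orthogonal images `T xᵢ`, since
`⟪T xᵢ, T xⱼ⟫ = ⟪xᵢ, T†T xⱼ⟫ = μⱼ ⟪xᵢ, xⱼ⟫`. Gram–Schmidt turns `(T xᵢ)` into an orthonormal basis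
`(yᵢ)` of `Y` with each `yⱼ` either a multiple of `T xⱼ` or orthogonal to all of them; this is a
singular value decomposition of `T`.
-/

open Module

namespace InnerProductSpace

variable {𝕜 E ι : Type*} [RCLike 𝕜] [NormedAddCommGroup E] [InnerProductSpace 𝕜 E]
  [LinearOrder ι] [LocallyFiniteOrderBot ι] [WellFoundedLT ι] [Fintype ι] [FiniteDimensional 𝕜 E]

theorem inner_gramSchmidtOrthonormalBasis_eq_zero_of_orthogonal
    (h : finrank 𝕜 E = Fintype.card ι) {f : ι → E}
    (hf : Pairwise fun i j => inner 𝕜 (f i) (f j) = 0)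
    {i j : ι} (hij : i ≠ j) : inner 𝕜 (gramSchmidtOrthonormalBasis h f j) (f i) = 0 := by
  by_cases hj : gramSchmidtNormed 𝕜 f j = 0
  · exact inner_gramSchmidtOrthonormalBasis_eq_zero h hj i
  · rw [gramSchmidtOrthonormalBasis_apply h hj, gramSchmidtNormed, gramSchmidt_of_orthogonal 𝕜 hf,
      inner_smul_left, hf hij.symm, mul_zero]

end InnerProductSpace

namespace LinearMap

open InnerProductSpace

variable {𝕜 E F : Type*} [RCLike 𝕜] [NormedAddCommGroup E] [InnerProductSpace 𝕜 E]
  [NormedAddCommGroup F] [InnerProductSpace 𝕜 F] [FiniteDimensional 𝕜 E] [FiniteDimensional 𝕜 F]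

theorem inner_apply_eigenvectorBasis_adjoint_comp_self_eq_zero (T : E →ₗ[𝕜] F) {n : ℕ}
    (hn : finrank 𝕜 E = n) {i j : Fin n} (hij : i ≠ j) :
    inner 𝕜 (T (T.isSymmetric_adjoint_comp_self.eigenvectorBasis hn i))
      (T (T.isSymmetric_adjoint_comp_self.eigenvectorBasis hn j)) = 0 := by
  rw [← adjoint_inner_right, ← comp_apply, T.isSymmetric_adjoint_comp_self.apply_eigenvectorBasis,
    inner_smul_right, (T.isSymmetric_adjoint_comp_self.eigenvectorBasis hn).orthonormal.2 hij,
    mul_zero]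

theorem exists_orthonormalBasis_inner_apply_eq_zero (T : E →ₗ[𝕜] F) {n : ℕ}
    (hE : finrank 𝕜 E = n) (hF : finrank 𝕜 F = n) :
    ∃ (b : OrthonormalBasis (Fin n) 𝕜 E) (c : OrthonormalBasis (Fin n) 𝕜 F),
      ∀ i j, i ≠ j → inner 𝕜 (T (b i)) (c j) = 0 := by
  let b := T.isSymmetric_adjoint_comp_self.eigenvectorBasis hE
  have hF' : finrank 𝕜 F = Fintype.card (Fin n) := by rw [hF, Fintype.card_fin]
  refine ⟨b, gramSchmidtOrthonormalBasis hF' fun i => T (b i), fun i j hij => ?_⟩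
  rw [← inner_conj_symm, inner_gramSchmidtOrthonormalBasis_eq_zero_of_orthogonal hF'
    (fun _ _ => T.inner_apply_eigenvectorBasis_adjoint_comp_self_eq_zero hE) hij, map_zero]

end LinearMap

theorem Module.Basis.span_range_subtype {R M ι : Type*} [Semiring R] [AddCommMonoid M]
    [Module R M] {K : Submodule R M} (b : Basis ι R K) :
    Submodule.span R (Set.range fun i => (b i : M)) = K := by
  change Submodule.span R (Set.range (K.subtype ∘ b)) = K
  rw [Set.range_comp, Submodule.span_image, b.span_eq,
    Submodule.map_top, Submodule.range_subtype]

/-- Given two `m`-dimensional subspaces `X, Y` of `ℝⁿ`, there exist orthonormal bases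
`{x₁, …, xₘ}` of `X` and `{y₁, …, yₘ}` of `Y` such that `⟪xᵢ, yⱼ⟫ = 0` whenever `i ≠ j`. -/
theorem exists_biorthogonal_orthonormal_bases {n m : ℕ}
    (X Y : Submodule ℝ (EuclideanSpace ℝ (Fin n)))
    (hX : Module.finrank ℝ X = m) (hY : Module.finrank ℝ Y = m) :
    ∃ x y : Fin m → EuclideanSpace ℝ (Fin n),
      Orthonormal ℝ x ∧ Orthonormal ℝ y ∧
      Submodule.span ℝ (Set.range x) = X ∧ Submodule.span ℝ (Set.range y) = Y ∧
      ∀ i j, i ≠ j → (inner ℝ (x i) (y j) : ℝ) = 0 := by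
  obtain ⟨b, c, hbc⟩ := (Y.orthogonalProjectionOnto.toLinearMap ∘ₗ X.subtype)
    |>.exists_orthonormalBasis_inner_apply_eq_zero hX hY
  refine ⟨fun i => b i, fun j => c j, b.orthonormal.comp_linearIsometry X.subtypeₗᵢ,
    c.orthonormal.comp_linearIsometry Y.subtypeₗᵢ, by simpa using b.toBasis.span_range_subtype,
    by simpa using c.toBasis.span_range_subtype, fun i j hij => ?_⟩
  simpa using hbc i j hij
end

section
/- For every n ∈ ℕ and every real λ with 1 ≤ λ ≤ √n, there exists a real n×n matrix A with ‖A eᵢ‖ = 1 for all 1 ≤ i ≤ n and ‖A‖ ≤ λ such that rank(A) < 4n/λ²; consequently, every σ ⊆ {1,…,n} such that the minimal stretch m_{A|U_σ} > 0 (where U_σ = span{eⱼ : j ∈ σ}) satisfies |σ| < 4n/λ². -/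
open scoped RealInnerProductSpace BigOperators

/-!
Take `k = ⌊λ²⌋` and cut the coordinates into consecutive blocks of length `k`; let `A` send
every `eⱼ` to the first basis vector of its block. The columns are unit vectors, `A` sums the
coordinates of each block, so Cauchy–Schwarz gives `‖A‖ ≤ √k ≤ λ`, and the range of `A` is
spanned by one vector per block, so `rank A ≤ n / k + 1 < 4n/λ²`. If `A` has positive minimal
stretch on `U_σ` it is injective there, whence `|σ| = dim U_σ ≤ rank A`.
-/

open Finset Module Matrix

section Pushforward

variable {ι κ : Type*} [Fintype ι] [DecidableEq κ]

def pushforwardMatrix (g : ι → κ) : Matrix κ ι ℝ :=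
  Matrix.of fun i j => if g j = i then 1 else 0

lemma pushforwardMatrix_mulVec (g : ι → κ) (x : ι → ℝ) (i : κ) :
    (pushforwardMatrix g *ᵥ x) i = ∑ j with g j = i, x j := by
  simp [pushforwardMatrix, mulVec, dotProduct, sum_filter]

lemma toEuclideanLin_pushforwardMatrix_single [DecidableEq ι] (g : ι → κ) (j : ι) :
    Matrix.toEuclideanLin (pushforwardMatrix g) (EuclideanSpace.single j 1) =
      EuclideanSpace.single (g j) 1 := by
  ext i
  simp [toLpLin_apply, pushforwardMatrix, eq_comm]

lemma norm_toEuclideanLin_pushforwardMatrix_le [DecidableEq ι] [Fintype κ] {g : ι → κ} {k : ℕ}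
    (hg : ∀ i, #{j : ι | g j = i} ≤ k) (x : EuclideanSpace ℝ ι) :
    ‖Matrix.toEuclideanLin (pushforwardMatrix g) x‖ ≤ √k * ‖x‖ := by
  have hsq : ‖Matrix.toEuclideanLin (pushforwardMatrix g) x‖ ^ 2 ≤ k * ‖x‖ ^ 2 := by
    rw [EuclideanSpace.real_norm_sq_eq, EuclideanSpace.real_norm_sq_eq, ← sum_fiberwise univ g,
      mul_sum]
    refine sum_le_sum fun i _ => ?_
    rw [ofLp_toLpLin, toLin'_apply, pushforwardMatrix_mulVec]
    exact sq_sum_le_card_mul_sum_sq.trans (by gcongr; exact_mod_cast hg i)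
  rw [← Real.sqrt_sq (norm_nonneg _), ← Real.sqrt_sq (norm_nonneg x), ← Real.sqrt_mul k.cast_nonneg]
  exact Real.sqrt_le_sqrt hsq

lemma rank_pushforwardMatrix_le (g : ι → κ) :
    (pushforwardMatrix g).rank ≤ #(univ.image g) := by
  refine Matrix.rank_le_card_of_support_subset _ _ fun i hi => ?_
  by_contra h
  simp only [coe_image, coe_univ, Set.image_univ, Set.mem_range, not_exists] at h
  exact hi (funext fun j => by simp [pushforwardMatrix, h j])

end Pushforward

lemma opNorm_le_of_norm_le {m n : ℕ} (A : Matrix (Fin m) (Fin n) ℝ) {c : ℝ} (hc : 0 ≤ c)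
    (h : ∀ x, ‖Matrix.toEuclideanLin A x‖ ≤ c * ‖x‖) : opNorm A ≤ c := by
  refine Real.sSup_le ?_ hc
  rintro _ ⟨x, hx, rfl⟩
  simpa [hx] using h x

lemma finrank_le_rank_of_minStretch_pos {m n : ℕ} (A : Matrix (Fin m) (Fin n) ℝ)
    (U : Submodule ℝ (EuclideanSpace ℝ (Fin n))) (h : 0 < minStretch A U) :
    finrank ℝ U ≤ A.rank := by
  set L := Matrix.toEuclideanLin A
  have hinj : Function.Injective (L ∘ₗ U.subtype) := by
    rw [← LinearMap.ker_eq_bot, LinearMap.ker_eq_bot']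
    rintro ⟨x, hxU⟩ hx
    simp only [LinearMap.comp_apply, Submodule.subtype_apply] at hx
    rw [Submodule.mk_eq_zero]
    by_contra hx0
    have : minStretch A U ≤ 0 :=
      csInf_le ⟨0, by rintro _ ⟨y, -, -, rfl⟩; exact norm_nonneg _⟩
        ⟨‖x‖⁻¹ • x, U.smul_mem _ hxU, norm_smul_inv_norm hx0, by simp [L, hx]⟩
    linarith
  rw [Matrix.rank_eq_finrank_range_toLin A (EuclideanSpace.basisFun (Fin m) ℝ).toBasis
    (EuclideanSpace.basisFun (Fin n) ℝ).toBasis, ← LinearMap.finrank_range_of_inj hinj]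
  exact Submodule.finrank_mono (LinearMap.range_comp_le_range _ _)

lemma finrank_span_single_image {ι : Type*} [Fintype ι] [DecidableEq ι] (σ : Finset ι) :
    finrank ℝ (Submodule.span ℝ ((fun j => EuclideanSpace.single j (1 : ℝ)) '' (σ : Set ι))) =
      #σ := by
  have hli :
      LinearIndependent ℝ (fun j : (σ : Set ι) => EuclideanSpace.single (j : ι) (1 : ℝ)) := by
    simpa [Function.comp_def] using
      (EuclideanSpace.basisFun ι ℝ).toBasis.linearIndependent.comp _ Subtype.val_injective
  rw [Set.image_eq_range, finrank_span_eq_card hli]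
  exact Fintype.card_coe σ

def blockStart {n : ℕ} (k : ℕ) (j : Fin n) : Fin n :=
  ⟨j / k * k, (Nat.div_mul_le_self j k).trans_lt j.isLt⟩

lemma card_filter_blockStart_eq_le {n k : ℕ} (hk : 0 < k) (i : Fin n) :
    #{j | blockStart k j = i} ≤ k := by
  refine (card_le_card_of_injOn (fun j => j.val % k) (t := range k)
    (fun j _ => mem_range.2 (Nat.mod_lt _ hk)) ?_).trans (card_range k).le
  intro a ha b hb hab
  rw [mem_coe, mem_filter_univ] at ha hb
  have hdiv : a / k * k = b / k * k := congrArg Fin.val (ha.trans hb.symm)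
  refine Fin.ext ?_
  rw [← Nat.div_add_mod' a k, ← Nat.div_add_mod' b k, hdiv]
  exact congrArg _ hab

lemma card_image_blockStart_le {n k : ℕ} (hk : 0 < k) :
    #(univ.image (blockStart (n := n) k)) ≤ n / k + 1 := by
  refine (card_le_card_of_injOn (fun t => t.val / k) (t := range (n / k + 1))
    (fun t _ => mem_range.2 (Nat.lt_succ_of_le (Nat.div_le_div_right t.isLt.le))) ?_).trans
    (card_range _).le
  rintro _ ha _ hb hab
  obtain ⟨a, -, rfl⟩ := mem_image.1 ha
  obtain ⟨b, -, rfl⟩ := mem_image.1 hb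
  have hdiv : a / k = b / k := by
    simpa [blockStart, Nat.mul_div_cancel _ hk] using hab
  exact Fin.ext (by simp [blockStart, hdiv])

lemma natCast_div_floor_add_one_lt {n : ℕ} {t : ℝ} (ht : 1 ≤ t) (htn : t ≤ n) :
    ((n / ⌊t⌋₊ : ℕ) : ℝ) + 1 < 4 * n / t := by
  set k := ⌊t⌋₊
  have hk : (1 : ℝ) ≤ k := by exact_mod_cast Nat.floor_pos.2 ht
  have hkt : t < k + 1 := Nat.lt_floor_add_one t
  have hq : ((n / k : ℕ) : ℝ) * k ≤ n := by exact_mod_cast Nat.div_mul_le_self n k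
  have hq0 : (0 : ℝ) ≤ (n / k : ℕ) := Nat.cast_nonneg _
  -- with `q = n / k`: `(q + 1) t ≤ q (k + 1) + n ≤ 3n < 4n`
  rw [lt_div_iff₀ (by linarith)]
  nlinarith [mul_le_mul_of_nonneg_left hkt.le hq0]

/-- **Optimality of the dimensional bound.** For every `n` and every `1 ≤ λ ≤ √n` there is
an `n × n` matrix `A` with unit-length columns and `‖A‖ ≤ λ` whose rank is less than
`4n/λ²`; consequently any `σ ⊆ {1,…,n}` on whose coordinate subspace `A` has positive
minimal stretch satisfies `|σ| < 4n/λ²`. -/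
theorem optimal_dimension_bound (n : ℕ) (lam : ℝ)
    (hlam1 : 1 ≤ lam) (hlamn : lam ≤ Real.sqrt n) :
    ∃ A : Matrix (Fin n) (Fin n) ℝ,
      (∀ i : Fin n, ‖Matrix.toEuclideanLin A (EuclideanSpace.single i (1:ℝ))‖ = 1) ∧
      opNorm A ≤ lam ∧
      (A.rank : ℝ) < 4 * n / lam ^ 2 ∧
      ∀ σ : Finset (Fin n),
        0 < minStretch A
            (Submodule.span ℝ ((fun j => EuclideanSpace.single j (1:ℝ)) '' (σ : Set (Fin n)))) →
        (σ.card : ℝ) < 4 * n / lam ^ 2 := by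
  have hlam0 : 0 ≤ lam := zero_le_one.trans hlam1
  have hsq1 : 1 ≤ lam ^ 2 := one_le_pow₀ hlam1
  have hsqn : lam ^ 2 ≤ n := (Real.le_sqrt hlam0 n.cast_nonneg).1 hlamn
  set k := ⌊lam ^ 2⌋₊
  have hk : 0 < k := Nat.floor_pos.2 hsq1
  set A := pushforwardMatrix (blockStart (n := n) k)
  have hrank : (A.rank : ℝ) < 4 * n / lam ^ 2 := calc
    (A.rank : ℝ) ≤ ((n / k : ℕ) : ℝ) + 1 := by
      exact_mod_cast (rank_pushforwardMatrix_le _).trans (card_image_blockStart_le hk)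
    _ < 4 * n / lam ^ 2 := natCast_div_floor_add_one_lt hsq1 hsqn
  refine ⟨A, fun j => ?_, opNorm_le_of_norm_le A hlam0 fun x => ?_, hrank, fun σ hσ => ?_⟩
  · rw [toEuclideanLin_pushforwardMatrix_single, PiLp.norm_single, norm_one]
  · refine (norm_toEuclideanLin_pushforwardMatrix_le (card_filter_blockStart_eq_le hk) x).trans ?_
    gcongr
    exact Real.sqrt_le_iff.2 ⟨hlam0, Nat.floor_le (by positivity)⟩
  · rw [← finrank_span_single_image]
    exact (Nat.cast_le.2 (finrank_le_rank_of_minStretch_pos A _ hσ)).trans_lt hrank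
end
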